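/- Let d ≥ 3, α = (d-2)/2, η ∈ S^{d-1}, and l a nonnegative integer. The harmonic component of highest degree l in the canonical decomposition of the polynomial P_η(x) = (x|η)^l, restricted to the unit sphere, is given by h_l(P_η)(ξ) = 2^{-l} Γ(α) Γ(l+1) (α+l)/Γ(α+l+1) · C^α_l((ξ|η)) for ξ ∈ S^{d-1}, where h_l(P) = Σ_{j=0}^{⌊l/2⌋} e^l_j(0) r^{2j} Δ^j P with e^l_j(0) = (-1)^j (α+l) Γ(α+l-j)/(4^j j! Γ(α+l+1)). -/

import Mathlib

/-!
On the unit sphere `r² = 1`, so `h_l(P_η)(ξ) = Σ_j e^l_j(0) (Δ^j P_η)(ξ)`. Since `|η| = 1`, the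
Laplacian acts on powers of the linear form `L = (x|η)` by `Δ L^m = m(m-1) L^{m-2}`, hence
`Δ^j L^l = l!/(l-2j)! · L^{l-2j}`. The resulting sum matches the Gegenbauer sum term by term,
using `Γ(n+1) = n!` and `4^j 2^{l-2j} = 2^l`.
-/

open MeasureTheory MvPolynomial Finset
open scoped RealInnerProductSpace

noncomputable section

/-- The Euclidean Laplacian `Δ = Σ_{j=1}^d ∂²/∂x_j²` acting on polynomials on `ℝ^d`. -/
def lap {d : ℕ} (P : MvPolynomial (Fin d) ℝ) : MvPolynomial (Fin d) ℝ :=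
  ∑ i, pderiv i (pderiv i P)

/-- The polynomial `r² = |x|² = Σ_j x_j²` on `ℝ^d`. -/
def r2 (d : ℕ) : MvPolynomial (Fin d) ℝ := ∑ i, X i * X i

/-- The coefficients `e^l_j(k) = (-1)^j (α+l-2k) Γ(α+l-2k-j) / (4^{k+j} k! j! Γ(α+l+1-k))`. -/
def ecoef (α : ℝ) (l j k : ℕ) : ℝ :=
  (-1) ^ j * (α + l - 2 * k) * Real.Gamma (α + l - 2 * k - j) /
    (4 ^ (k + j) * (Nat.factorial k) * (Nat.factorial j) * Real.Gamma (α + l + 1 - k))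

/-- The harmonic component `h_{l-2k}(P) = Σ_{j=0}^{⌊l/2⌋-k} e^l_j(k) r^{2j} Δ^{k+j} P`. -/
def harmComp (d : ℕ) (α : ℝ) (l k : ℕ) (P : MvPolynomial (Fin d) ℝ) :
    MvPolynomial (Fin d) ℝ :=
  ∑ j ∈ Finset.range (l / 2 - k + 1), C (ecoef α l j k) * (r2 d) ^ j * lap^[k + j] P

/-- The Gegenbauer polynomial of degree `m` and index `α`. -/
def gegenbauer (α : ℝ) (m : ℕ) (t : ℝ) : ℝ :=
  ∑ j ∈ Finset.range (m / 2 + 1),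
    (-1) ^ j * Real.Gamma (α + m - j) /
      (Real.Gamma α * Real.Gamma (j + 1) * Real.Gamma ((m : ℝ) + 1 - 2 * j)) *
      (2 * t) ^ (m - 2 * j)

/-- The elementary zonal polynomial `P_η(x) = (x|η)^l` as a polynomial on `ℝ^d`. -/
def zonalPoly (d l : ℕ) (η : EuclideanSpace ℝ (Fin d)) : MvPolynomial (Fin d) ℝ :=
  (∑ i, C (η i) * X i) ^ l

lemma lap_C_mul {d : ℕ} (c : ℝ) (P : MvPolynomial (Fin d) ℝ) : lap (C c * P) = C c * lap P := by
  simp [lap, Finset.mul_sum]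

def linearForm {d : ℕ} (a : Fin d → ℝ) : MvPolynomial (Fin d) ℝ := ∑ i, C (a i) * X i

section LinearForm

variable {d : ℕ} (a : Fin d → ℝ)

lemma pderiv_linearForm (i : Fin d) : pderiv i (linearForm a) = C (a i) := by
  rw [linearForm, map_sum, Finset.sum_eq_single i]
  · simp
  · intro j _ hj
    simp [pderiv_X_of_ne hj]
  · simp

lemma pderiv_linearForm_pow (i : Fin d) (m : ℕ) :
    pderiv i (linearForm a ^ m) = C (m * a i) * linearForm a ^ (m - 1) := by
  rw [pderiv_pow, pderiv_linearForm, map_mul, map_natCast]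
  ring

lemma lap_linearForm_pow (m : ℕ) :
    lap (linearForm a ^ m) =
      C (m.descFactorial 2 * ∑ i, a i ^ 2) * linearForm a ^ (m - 2) := by
  have hii (i : Fin d) : pderiv i (pderiv i (linearForm a ^ m)) =
      C (m.descFactorial 2 * a i ^ 2) * linearForm a ^ (m - 2) := by
    rw [pderiv_linearForm_pow, pderiv_C_mul, pderiv_linearForm_pow, ← mul_assoc, ← map_mul,
      Nat.sub_sub, Nat.descFactorial_succ, Nat.descFactorial_one]
    push_cast
    congr 2
    ring
  simp only [lap, hii, ← Finset.sum_mul, ← map_sum, Finset.mul_sum]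

lemma iterate_lap_linearForm_pow (l j : ℕ) :
    lap^[j] (linearForm a ^ l) =
      C (l.descFactorial (2 * j) * (∑ i, a i ^ 2) ^ j) * linearForm a ^ (l - 2 * j) := by
  induction j with
  | zero => simp
  | succ j ih =>
    have hdesc : l.descFactorial (2 * j) * (l - 2 * j).descFactorial 2 =
        l.descFactorial (2 * (j + 1)) := by
      have h := Nat.descFactorial_mul_descFactorial (n := l) (show 2 * j ≤ 2 * (j + 1) by omega)
      rwa [show 2 * (j + 1) - 2 * j = 2 by omega, mul_comm] at h
    rw [Function.iterate_succ_apply', ih, lap_C_mul, lap_linearForm_pow, ← mul_assoc, ← map_mul,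
      Nat.sub_sub, ← hdesc]
    push_cast
    congr 2
    ring

end LinearForm

lemma zonalPoly_eq_linearForm_pow (d l : ℕ) (η : EuclideanSpace ℝ (Fin d)) :
    zonalPoly d l η = linearForm (fun i => η i) ^ l :=
  rfl

lemma eval_r2 {d : ℕ} (x : EuclideanSpace ℝ (Fin d)) : eval (fun i => x i) (r2 d) = ‖x‖ ^ 2 := by
  rw [EuclideanSpace.real_norm_sq_eq]
  simp [r2, sq]

lemma eval_linearForm {d : ℕ} (x y : EuclideanSpace ℝ (Fin d)) :
    eval (fun i => x i) (linearForm fun i => y i) = ⟪x, y⟫ := by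
  simp [linearForm, PiLp.inner_apply, mul_comm]

lemma ecoef_zero_mul_descFactorial {α : ℝ} (hΓα : Real.Gamma α ≠ 0) {l j : ℕ} (hj : 2 * j ≤ l) (t : ℝ) :
    ecoef α l j 0 * (l.descFactorial (2 * j) * t ^ (l - 2 * j)) =
      (2 : ℝ) ^ (-(l : ℤ)) * Real.Gamma α * Real.Gamma ((l : ℝ) + 1) *
        ((α + l) / Real.Gamma (α + l + 1)) *
        ((-1) ^ j * Real.Gamma (α + l - j) /
          (Real.Gamma α * Real.Gamma ((j : ℝ) + 1) * Real.Gamma ((l : ℝ) + 1 - 2 * j)) *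
          (2 * t) ^ (l - 2 * j)) := by
  have hΓj : Real.Gamma ((j : ℝ) + 1) = j.factorial := Real.Gamma_nat_eq_factorial j
  have hΓl : Real.Gamma ((l : ℝ) + 1) = l.factorial := Real.Gamma_nat_eq_factorial l
  have hΓlj : Real.Gamma ((l : ℝ) + 1 - 2 * j) = (l - 2 * j).factorial := by
    rw [← Real.Gamma_nat_eq_factorial]
    push_cast [hj]
    ring_nf
  have hdesc : (l.descFactorial (2 * j) : ℝ) = l.factorial / (l - 2 * j).factorial := by
    rw [eq_div_iff (by positivity)]
    exact_mod_cast (mul_comm _ _).trans (Nat.factorial_mul_descFactorial hj)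
  have hpow : (2 : ℝ) ^ (l - 2 * j) = 2 ^ l / 4 ^ j := by
    rw [pow_sub₀ _ two_ne_zero hj, pow_mul]
    norm_num [div_eq_mul_inv]
  simp only [ecoef, Nat.cast_zero, mul_zero, sub_zero, Nat.factorial_zero, Nat.cast_one,
    zero_add, mul_one]
  rw [hdesc, hΓj, hΓl, hΓlj, zpow_neg, zpow_natCast, mul_pow, hpow]
  field_simp

/-- **Highest harmonic component of `(x|η)^l` (d ≥ 3, α = (d-2)/2).** On the unit sphere,
`h_l(P_η)(ξ) = 2^{-l} Γ(α) Γ(l+1) (α+l)/Γ(α+l+1) · C^α_l((ξ|η))`, where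
`h_l(P) = Σ_{j=0}^{⌊l/2⌋} e^l_j(0) r^{2j} Δ^j P`. -/
theorem highest_harmonic_component (d l : ℕ) (hd : 3 ≤ d)
    (α : ℝ) (hα : α = ((d : ℝ) - 2) / 2)
    (η ξ : EuclideanSpace ℝ (Fin d)) (hη : ‖η‖ = 1) (hξ : ‖ξ‖ = 1) :
    eval (fun i => ξ i) (harmComp d α l 0 (zonalPoly d l η)) =
      (2 : ℝ) ^ (-(l : ℤ)) * Real.Gamma α * Real.Gamma ((l : ℝ) + 1) *
        ((α + l) / Real.Gamma (α + l + 1)) * gegenbauer α l ⟪ξ, η⟫ := by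
  have hΓα : Real.Gamma α ≠ 0 := by
    have : (3 : ℝ) ≤ d := by exact_mod_cast hd
    exact (Real.Gamma_pos_of_pos (by rw [hα]; linarith)).ne'
  have hη_sq : ∑ i, η i ^ 2 = 1 := by rw [← EuclideanSpace.real_norm_sq_eq, hη, one_pow]
  rw [harmComp, zonalPoly_eq_linearForm_pow, gegenbauer, map_sum, Finset.mul_sum]
  refine Finset.sum_congr rfl fun j hj => ?_
  have hjl : 2 * j ≤ l := by
    rw [Finset.mem_range] at hj
    omega
  rw [zero_add, iterate_lap_linearForm_pow, hη_sq]
  simp only [map_mul, map_pow, eval_C, eval_r2, hξ, eval_linearForm, one_pow, mul_one]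
  exact ecoef_zero_mul_descFactorial hΓα hjl _
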